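/- Let G be an n-vertex graph with at least α·n^{3/2} edges. Then G has a subgraph H on the same vertex set such that e(H) ≥ (1/2)α·n^{3/2} and for every edge uv ∈ E(H), the vertex u has at least (1/8)α·n^{1/2} neighbors w in H with codegree d_H(v, w) ≥ α²/32. -/

import Mathlib

open SimpleGraph

/-- Number of common neighbours of `u` and `v` in `H`. -/
noncomputable def codeg {V : Type*} (H : SimpleGraph V) (u v : V) : ℕ :=
  (H.neighborSet u ∩ H.neighborSet v).ncard

namespace CleanedAux

set_option linter.unusedSectionVars false

open Finset
open scoped Classical

variable {V : Type*} [Fintype V]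

noncomputable def deg (H : SimpleGraph V) (v : V) : ℕ := (H.neighborSet v).ncard

noncomputable def esize (H : SimpleGraph V) : ℕ := H.edgeSet.ncard

noncomputable def psi (α : ℝ) (H : SimpleGraph V) : ℕ :=
  ∑ p : V × V, min (codeg H p.1 p.2) ⌊α ^ 2 / 32⌋₊

noncomputable def nsupp (H : SimpleGraph V) : ℕ := {v | 0 < deg H v}.ncard

noncomputable def phi (α : ℝ) (H : SimpleGraph V) : ℝ :=
  (α * Real.sqrt (Fintype.card V) / 4) * nsupp H
    + psi α H / (α * Real.sqrt (Fintype.card V) / 4)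

/-- Delete all edges at a vertex. -/
def delV (H : SimpleGraph V) (x : V) : SimpleGraph V where
  Adj a b := H.Adj a b ∧ a ≠ x ∧ b ≠ x
  symm := by constructor; rintro a b ⟨h, ha, hb⟩; exact ⟨h.symm, hb, ha⟩
  loopless := by constructor; rintro a ⟨h, _, _⟩; exact H.irrefl h

/-- Delete one edge. -/
def delE (H : SimpleGraph V) (u v : V) : SimpleGraph V where
  Adj a b := H.Adj a b ∧ ¬(a = u ∧ b = v) ∧ ¬(a = v ∧ b = u)
  symm := by
    constructor
    rintro a b ⟨h, h1, h2⟩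
    exact ⟨h.symm, fun hh => h2 ⟨hh.2, hh.1⟩, fun hh => h1 ⟨hh.2, hh.1⟩⟩
  loopless := by constructor; rintro a ⟨h, _, _⟩; exact H.irrefl h

lemma delV_adj {H : SimpleGraph V} {x a b : V} :
    (delV H x).Adj a b ↔ H.Adj a b ∧ a ≠ x ∧ b ≠ x := Iff.rfl

lemma delE_adj {H : SimpleGraph V} {u v a b : V} :
    (delE H u v).Adj a b ↔ H.Adj a b ∧ ¬(a = u ∧ b = v) ∧ ¬(a = v ∧ b = u) := Iff.rfl

lemma delV_le (H : SimpleGraph V) (x : V) : delV H x ≤ H := by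
  intro a b h; exact h.1

lemma delE_le (H : SimpleGraph V) (u v : V) : delE H u v ≤ H := by
  intro a b h; exact h.1

lemma nbhd_mono {H' H : SimpleGraph V} (h : H' ≤ H) (v : V) :
    H'.neighborSet v ⊆ H.neighborSet v := fun _ hw => h hw

lemma deg_mono {H' H : SimpleGraph V} (h : H' ≤ H) (v : V) : deg H' v ≤ deg H v :=
  Set.ncard_le_ncard (nbhd_mono h v) (Set.toFinite _)

lemma codeg_mono {H' H : SimpleGraph V} (h : H' ≤ H) (u v : V) :
    codeg H' u v ≤ codeg H u v :=
  Set.ncard_le_ncard (Set.inter_subset_inter (nbhd_mono h u) (nbhd_mono h v)) (Set.toFinite _)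

lemma codeg_comm (H : SimpleGraph V) (u v : V) : codeg H u v = codeg H v u := by
  unfold codeg; rw [Set.inter_comm]

lemma codeg_self (H : SimpleGraph V) (v : V) : codeg H v v = deg H v := by
  unfold codeg deg; rw [Set.inter_self]

lemma esize_split {H' H : SimpleGraph V} (h : H' ≤ H) :
    (H.edgeSet \ H'.edgeSet).ncard + esize H' = esize H :=
  Set.ncard_diff_add_ncard_of_subset (edgeSet_mono h) (Set.toFinite _)

lemma ncard_incidenceSet (H : SimpleGraph V) (x : V) :
    (H.incidenceSet x).ncard = deg H x := by
  unfold deg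
  rw [← Nat.card_coe_set_eq, ← Nat.card_coe_set_eq]
  exact Nat.card_congr (H.incidenceSetEquivNeighborSet x)

lemma esize_delV (H : SimpleGraph V) (x : V) :
    esize H ≤ esize (delV H x) + deg H x := by
  have hsub : H.edgeSet \ (delV H x).edgeSet ⊆ H.incidenceSet x := by
    rintro e ⟨he, hne⟩
    induction e using Sym2.ind with
    | _ a b =>
      rw [mem_edgeSet] at he
      refine ⟨he, ?_⟩
      by_contra hx
      rw [Sym2.mem_iff] at hx
      push_neg at hx
      exact hne (mem_edgeSet _ |>.mpr (delV_adj.mpr ⟨he, Ne.symm hx.1, Ne.symm hx.2⟩))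
  have h1 : (H.edgeSet \ (delV H x).edgeSet).ncard ≤ deg H x := by
    rw [← ncard_incidenceSet H x]
    exact Set.ncard_le_ncard hsub (Set.toFinite _)
  have := esize_split (delV_le H x)
  omega

lemma esize_delE (H : SimpleGraph V) (u v : V) :
    esize H ≤ esize (delE H u v) + 1 := by
  have hsub : H.edgeSet \ (delE H u v).edgeSet ⊆ {s(u, v)} := by
    rintro e ⟨he, hne⟩
    induction e using Sym2.ind with
    | _ a b =>
      rw [mem_edgeSet] at he
      by_contra hx
      apply hne
      rw [mem_edgeSet]
      refine delE_adj.mpr ⟨he, ?_, ?_⟩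
      · rintro ⟨rfl, rfl⟩; exact hx rfl
      · rintro ⟨rfl, rfl⟩; exact hx Sym2.eq_swap
  have h1 : (H.edgeSet \ (delE H u v).edgeSet).ncard ≤ 1 := by
    have := Set.ncard_le_ncard hsub (Set.toFinite _)
    simpa using this
  have := esize_split (delE_le H u v)
  omega

lemma esize_delV_lt {H : SimpleGraph V} {x : V} (hx : 0 < deg H x) :
    esize (delV H x) < esize H := by
  apply Set.ncard_lt_ncard _ (Set.toFinite _)
  rw [Set.ssubset_iff_of_subset (edgeSet_mono (delV_le H x))]
  obtain ⟨y, hy⟩ := Set.nonempty_of_ncard_ne_zero (by omega : deg H x ≠ 0)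
  refine ⟨s(x, y), mem_edgeSet _ |>.mpr hy, ?_⟩
  rw [mem_edgeSet, delV_adj]
  rintro ⟨-, hxx, -⟩
  exact hxx rfl

lemma esize_delE_lt {H : SimpleGraph V} {u v : V} (huv : H.Adj u v) :
    esize (delE H u v) < esize H := by
  apply Set.ncard_lt_ncard _ (Set.toFinite _)
  rw [Set.ssubset_iff_of_subset (edgeSet_mono (delE_le H u v))]
  refine ⟨s(u, v), mem_edgeSet _ |>.mpr huv, ?_⟩
  rw [mem_edgeSet, delE_adj]
  rintro ⟨-, h1, -⟩
  exact h1 ⟨rfl, rfl⟩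

lemma deg_delV_self (H : SimpleGraph V) (x : V) : deg (delV H x) x = 0 := by
  unfold deg
  convert Set.ncard_empty V
  ext w
  simp only [mem_neighborSet, delV_adj, Set.mem_empty_iff_false, iff_false]
  rintro ⟨-, hxx, -⟩
  exact hxx rfl

lemma nsupp_delV {H : SimpleGraph V} {x : V} (hx : 0 < deg H x) :
    nsupp (delV H x) + 1 ≤ nsupp H := by
  have hsub : {v | 0 < deg (delV H x) v} ⊆ {v | 0 < deg H v} \ {x} := by
    intro v hv
    refine ⟨lt_of_lt_of_le hv (deg_mono (delV_le H x) v), ?_⟩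
    simp only [Set.mem_singleton_iff]
    rintro rfl
    rw [Set.mem_setOf_eq, deg_delV_self] at hv
    omega
  have h1 : nsupp (delV H x) ≤ ({v | 0 < deg H v} \ {x}).ncard :=
    Set.ncard_le_ncard hsub (Set.toFinite _)
  rw [Set.ncard_diff_singleton_of_mem (by exact hx)] at h1
  have h2 : 1 ≤ nsupp H := by
    have hs : ({x} : Set V) ⊆ {v | 0 < deg H v} := by
      intro y hy
      rw [Set.mem_singleton_iff] at hy
      subst hy
      exact hx
    have := Set.ncard_le_ncard hs (Set.toFinite _)
    simpa [nsupp] using this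
  unfold nsupp at *
  omega

lemma nsupp_mono {H' H : SimpleGraph V} (h : H' ≤ H) : nsupp H' ≤ nsupp H := by
  apply Set.ncard_le_ncard _ (Set.toFinite _)
  intro v hv
  exact lt_of_lt_of_le hv (deg_mono h v)

lemma psi_mono (α : ℝ) {H' H : SimpleGraph V} (h : H' ≤ H) : psi α H' ≤ psi α H := by
  apply Finset.sum_le_sum
  intro p _
  exact min_le_min (codeg_mono h p.1 p.2) le_rfl

lemma deg_eq_filter (H : SimpleGraph V) (u : V) :
    (univ.filter (H.Adj u ·)).card = deg H u := by
  rw [deg, ← Set.ncard_coe_finset]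
  congr 1
  ext w
  simp

lemma ncard_setOf_eq_filter (p : V → Prop) :
    {w | p w}.ncard = (univ.filter p).card := by
  rw [← Set.ncard_coe_finset]
  congr 1
  ext w
  simp

/-- The key potential drop when deleting a bad edge. -/
lemma psi_drop (α : ℝ) {H : SimpleGraph V} {u v : V} (huv : H.Adj u v)
    (S : Finset V) (hS : ∀ w ∈ S, H.Adj u w ∧ (codeg H v w : ℝ) < α ^ 2 / 32)
    (hvS : v ∉ S) :
    psi α (delE H u v) + 2 * S.card ≤ psi α H := by
  set c := ⌊α ^ 2 / 32⌋₊ with hc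
  set H' := delE H u v with hH'
  set T : Finset (V × V) :=
    S.image (fun w => ((v, w) : V × V)) ∪ S.image (fun w => ((w, v) : V × V)) with hT
  have hTcard : T.card = 2 * S.card := by
    rw [hT, Finset.card_union_of_disjoint, Finset.card_image_of_injective,
      Finset.card_image_of_injective]
    · ring
    · intro a b hab; exact (Prod.ext_iff.mp hab).1
    · intro a b hab; exact (Prod.ext_iff.mp hab).2
    · rw [Finset.disjoint_left]
      rintro p hp1 hp2
      simp only [Finset.mem_image] at hp1 hp2
      obtain ⟨w1, hw1, rfl⟩ := hp1
      obtain ⟨w2, hw2, hp⟩ := hp2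
      have : w2 = v := (Prod.ext_iff.mp hp).1
      subst this
      exact hvS hw2
  have hdrop : ∀ w ∈ S, min (codeg H' v w) c + 1 ≤ min (codeg H v w) c := by
    intro w hw
    obtain ⟨huw, hcw⟩ := hS w hw
    have hu : u ∈ H.neighborSet v ∩ H.neighborSet w := ⟨huv.symm, huw.symm⟩
    have hsub : H'.neighborSet v ∩ H'.neighborSet w ⊆
        (H.neighborSet v ∩ H.neighborSet w) \ {u} := by
      rintro z ⟨hz1, hz2⟩
      refine ⟨⟨nbhd_mono (delE_le H u v) v hz1, nbhd_mono (delE_le H u v) w hz2⟩, ?_⟩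
      simp only [Set.mem_singleton_iff]
      rintro rfl
      rw [mem_neighborSet, hH', delE_adj] at hz1
      exact hz1.2.2 ⟨rfl, rfl⟩
    have h1 : codeg H' v w ≤ codeg H v w - 1 := by
      have := Set.ncard_le_ncard hsub (Set.toFinite _)
      rwa [Set.ncard_diff_singleton_of_mem hu] at this
    have h2 : 1 ≤ codeg H v w := by
      have hs : ({u} : Set V) ⊆ H.neighborSet v ∩ H.neighborSet w := by
        intro y hy; rw [Set.mem_singleton_iff] at hy; subst hy; exact hu
      have := Set.ncard_le_ncard hs (Set.toFinite _)
      simpa [codeg] using this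
    have h3 : codeg H v w ≤ c := Nat.le_floor hcw.le
    omega
  have key : ∀ p ∈ (univ : Finset (V × V)),
      min (codeg H' p.1 p.2) c + (if p ∈ T then 1 else 0) ≤ min (codeg H p.1 p.2) c := by
    intro p _
    by_cases hp : p ∈ T
    · simp only [hp, if_true]
      rw [hT, Finset.mem_union] at hp
      rcases hp with hp | hp
      · simp only [Finset.mem_image] at hp
        obtain ⟨w, hw, rfl⟩ := hp
        exact hdrop w hw
      · simp only [Finset.mem_image] at hp
        obtain ⟨w, hw, rfl⟩ := hp
        simp only
        rw [codeg_comm H' w v, codeg_comm H w v]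
        exact hdrop w hw
    · simp only [hp, if_false, add_zero]
      exact min_le_min (codeg_mono (delE_le H u v) p.1 p.2) le_rfl
  have hsum := Finset.sum_le_sum key
  rw [Finset.sum_add_distrib] at hsum
  have hind : (∑ p : V × V, if p ∈ T then (1 : ℕ) else 0) = T.card := by
    rw [Finset.sum_ite_mem, Finset.univ_inter, Finset.card_eq_sum_ones]
  rw [hind, hTcard] at hsum
  exact hsum

lemma phi_nonneg {α : ℝ} (hα : 0 < α) (H : SimpleGraph V) : 0 ≤ phi α H := by
  unfold phi
  have h0 : (0 : ℝ) ≤ Real.sqrt (Fintype.card V) := Real.sqrt_nonneg _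
  positivity

/-- Main induction: cleaning process. -/
lemma clean_ind (α : ℝ) (hα : 0 < α)
    (hβD : α ^ 2 / 32 ≤ α * Real.sqrt (Fintype.card V) / 4)
    (hD : 0 < α * Real.sqrt (Fintype.card V) / 4) :
    ∀ (k : ℕ) (H : SimpleGraph V), esize H ≤ k →
      ∃ H', H' ≤ H ∧
        (∀ u v, H'.Adj u v →
          (1 / 8 : ℝ) * α * Real.sqrt (Fintype.card V) ≤
            (({w | H'.Adj u w ∧ α ^ 2 / 32 ≤ (codeg H' v w : ℝ)}).ncard : ℝ)) ∧
        (esize H : ℝ) - esize H' ≤ phi α H - phi α H' := by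
  set D : ℝ := α * Real.sqrt (Fintype.card V) / 4 with hDdef
  intro k
  induction k with
  | zero =>
    intro H hH
    refine ⟨H, le_rfl, ?_, by simp⟩
    intro u v huv
    exfalso
    have h1 : s(u, v) ∈ H.edgeSet := mem_edgeSet _ |>.mpr huv
    have h2 : 0 < esize H := Set.ncard_pos (Set.toFinite _) |>.mpr ⟨_, h1⟩
    omega
  | succ k ih =>
    intro H hH
    by_cases hbv : ∃ x, 0 < deg H x ∧ (deg H x : ℝ) < D
    · -- delete a low-degree vertex
      obtain ⟨x, hx, hxD⟩ := hbv
      have hlt : esize (delV H x) < esize H := esize_delV_lt hx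
      obtain ⟨H', hle, hprop, hineq⟩ := ih (delV H x) (by omega)
      refine ⟨H', le_trans hle (delV_le H x), hprop, ?_⟩
      have h1 : (esize H : ℝ) ≤ esize (delV H x) + deg H x := by
        exact_mod_cast esize_delV H x
      have h2 : (nsupp (delV H x) : ℝ) + 1 ≤ nsupp H := by
        exact_mod_cast nsupp_delV hx
      have h3 : (psi α (delV H x) : ℝ) ≤ psi α H := by
        exact_mod_cast psi_mono α (delV_le H x)
      have hphi : phi α (delV H x) + D ≤ phi α H := by
        unfold phi
        rw [← hDdef]
        have e1 : D * ((nsupp (delV H x) : ℝ) + 1) ≤ D * nsupp H :=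
          mul_le_mul_of_nonneg_left h2 hD.le
        have e2 : (psi α (delV H x) : ℝ) / D ≤ psi α H / D := by gcongr
        nlinarith
      linarith
    · by_cases hbe : ∃ u v, H.Adj u v ∧
          (({w | H.Adj u w ∧ α ^ 2 / 32 ≤ (codeg H v w : ℝ)}).ncard : ℝ) <
            (1 / 8 : ℝ) * α * Real.sqrt (Fintype.card V)
      · -- delete a bad edge
        obtain ⟨u, v, huv, hbad⟩ := hbe
        push_neg at hbv
        have hdegu : D ≤ (deg H u : ℝ) := by
          refine hbv u ?_
          rw [deg]
          exact Set.ncard_pos (Set.toFinite _) |>.mpr ⟨v, huv⟩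
        have hdegv : D ≤ (deg H v : ℝ) := by
          refine hbv v ?_
          rw [deg]
          exact Set.ncard_pos (Set.toFinite _) |>.mpr ⟨u, huv.symm⟩
        set S : Finset V := (univ.filter (H.Adj u ·)).filter
          (fun w => ¬ (α ^ 2 / 32 ≤ (codeg H v w : ℝ))) with hSdef
        have hS : ∀ w ∈ S, H.Adj u w ∧ (codeg H v w : ℝ) < α ^ 2 / 32 := by
          intro w hw
          rw [hSdef, Finset.mem_filter, Finset.mem_filter] at hw
          exact ⟨hw.1.2, not_le.mp hw.2⟩
        have hvS : v ∉ S := by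
          intro hv
          have h1 := (hS v hv).2
          rw [codeg_self] at h1
          linarith
        have hsplit : ((univ.filter (H.Adj u ·)).filter
            (fun w => α ^ 2 / 32 ≤ (codeg H v w : ℝ))).card + S.card = deg H u := by
          rw [hSdef, ← deg_eq_filter H u]
          exact Finset.card_filter_add_card_filter_not _
        have hgood : (({w | H.Adj u w ∧ α ^ 2 / 32 ≤ (codeg H v w : ℝ)}).ncard : ℝ) =
            (((univ.filter (H.Adj u ·)).filter
              (fun w => α ^ 2 / 32 ≤ (codeg H v w : ℝ))).card : ℝ) := by
          rw [ncard_setOf_eq_filter]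
          norm_cast
          congr 1
          ext w
          simp [Finset.mem_filter, and_assoc]
        have hScard : D / 2 ≤ (S.card : ℝ) := by
          have hc : ((((univ.filter (H.Adj u ·)).filter
              (fun w => α ^ 2 / 32 ≤ (codeg H v w : ℝ))).card : ℝ)) + S.card = deg H u := by
            exact_mod_cast hsplit
          rw [hgood] at hbad
          have hDval : (1 / 8 : ℝ) * α * Real.sqrt (Fintype.card V) = D / 2 := by
            rw [hDdef]; ring
          rw [hDval] at hbad
          linarith
        have hpsi := psi_drop α huv S hS hvS
        have hlt : esize (delE H u v) < esize H := esize_delE_lt huv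
        obtain ⟨H', hle, hprop, hineq⟩ := ih (delE H u v) (by omega)
        refine ⟨H', le_trans hle (delE_le H u v), hprop, ?_⟩
        have h1 : (esize H : ℝ) ≤ esize (delE H u v) + 1 := by
          exact_mod_cast esize_delE H u v
        have h3 : (psi α (delE H u v) : ℝ) + D ≤ psi α H := by
          have hcast : (psi α (delE H u v) : ℝ) + 2 * S.card ≤ psi α H := by
            exact_mod_cast hpsi
          linarith
        have hsupp : (nsupp (delE H u v) : ℝ) ≤ nsupp H := by
          exact_mod_cast nsupp_mono (delE_le H u v)
        have hphi : phi α (delE H u v) + 1 ≤ phi α H := by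
          unfold phi
          rw [← hDdef]
          have e1 : D * (nsupp (delE H u v) : ℝ) ≤ D * nsupp H :=
            mul_le_mul_of_nonneg_left hsupp hD.le
          have e2 : ((psi α (delE H u v) : ℝ) + D) / D ≤ psi α H / D := by gcongr
          have e3 : ((psi α (delE H u v) : ℝ) + D) / D = psi α (delE H u v) / D + 1 := by
            field_simp
          linarith
        linarith
      · push_neg at hbe
        exact ⟨H, le_rfl, hbe, by simp⟩

lemma esize_le_sq (G : SimpleGraph V) : esize G ≤ Fintype.card V * Fintype.card V := by
  letI : Fintype ↑G.edgeSet := Fintype.ofFinite _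
  have h1 : esize G = G.edgeFinset.card := by
    rw [esize, Set.ncard_eq_toFinset_card']
    try rfl
  have h2 : G.edgeFinset.card ≤ (Fintype.card V).choose 2 :=
    SimpleGraph.card_edgeFinset_le_card_choose_two
  have h3 : (Fintype.card V).choose 2 ≤ Fintype.card V * Fintype.card V := by
    rw [Nat.choose_two_right]
    calc Fintype.card V * (Fintype.card V - 1) / 2 ≤ Fintype.card V * (Fintype.card V - 1) :=
          Nat.div_le_self _ _
      _ ≤ Fintype.card V * Fintype.card V := Nat.mul_le_mul_left _ (Nat.sub_le _ _)
  omega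

end CleanedAux

/-- If an `n`-vertex graph `G` has at least `α·n^{3/2}` edges, then `G` has a spanning
subgraph `H` with `e(H) ≥ (1/2)α·n^{3/2}` such that for every edge `uv` of `H`, the
vertex `u` has at least `(1/8)α·n^{1/2}` neighbours `w` in `H` with
`d_H(v,w) ≥ α²/32`. -/
theorem cleaned_subgraph {V : Type*} [Fintype V] (α : ℝ) (G : SimpleGraph V)
    (he : α * (Fintype.card V : ℝ) ^ ((3 : ℝ) / 2) ≤ (G.edgeSet.ncard : ℝ)) :
    ∃ H : SimpleGraph V, H ≤ G ∧
      (1 / 2) * α * (Fintype.card V : ℝ) ^ ((3 : ℝ) / 2) ≤ (H.edgeSet.ncard : ℝ) ∧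
      ∀ u v, H.Adj u v →
        (1 / 8) * α * (Fintype.card V : ℝ) ^ ((1 : ℝ) / 2) ≤
          (({w | H.Adj u w ∧ α ^ 2 / 32 ≤ (codeg H v w : ℝ)}).ncard : ℝ) := by
  classical
  by_cases hpos : 0 < α ∧ 0 < Fintype.card V
  · obtain ⟨hα, hn0⟩ := hpos
    set n := Fintype.card V with hn
    have hn1 : (1 : ℝ) ≤ (n : ℝ) := by exact_mod_cast hn0
    have hnn : (0 : ℝ) < (n : ℝ) := by linarith
    have hs1 : 1 ≤ Real.sqrt n := by
      rw [show (1 : ℝ) = Real.sqrt 1 from Real.sqrt_one.symm]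
      exact Real.sqrt_le_sqrt hn1
    have hss : Real.sqrt n * Real.sqrt n = (n : ℝ) := Real.mul_self_sqrt hnn.le
    have h32 : ((n : ℝ)) ^ ((3 : ℝ) / 2) = (n : ℝ) * Real.sqrt n := by
      rw [show (3 : ℝ) / 2 = 1 + 1 / 2 by norm_num, Real.rpow_add hnn, Real.rpow_one,
        ← Real.sqrt_eq_rpow]
    have h12 : ((n : ℝ)) ^ ((1 : ℝ) / 2) = Real.sqrt n := (Real.sqrt_eq_rpow _).symm
    have he' : α * ((n : ℝ) * Real.sqrt n) ≤ (CleanedAux.esize G : ℝ) := by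
      rw [← h32]
      exact he
    have hub : (CleanedAux.esize G : ℝ) ≤ (n : ℝ) * n := by
      exact_mod_cast CleanedAux.esize_le_sq G
    have hα8 : α ≤ Real.sqrt n := by
      have hpos2 : (0 : ℝ) < (n : ℝ) * Real.sqrt n := by positivity
      have hkey : (n : ℝ) * n = Real.sqrt n * ((n : ℝ) * Real.sqrt n) := by
        linear_combination (-(n : ℝ)) * hss
      have : α * ((n : ℝ) * Real.sqrt n) ≤ Real.sqrt n * ((n : ℝ) * Real.sqrt n) := by
        rw [← hkey]; linarith
      exact le_of_mul_le_mul_right (by linarith [this]) hpos2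
    have hβD : α ^ 2 / 32 ≤ α * Real.sqrt n / 4 := by nlinarith
    have hD : 0 < α * Real.sqrt n / 4 := by positivity
    obtain ⟨H', hle, hprop, hineq⟩ :=
      CleanedAux.clean_ind α hα hβD hD (CleanedAux.esize G) G le_rfl
    refine ⟨H', hle, ?_, ?_⟩
    · rw [h32]
      have hphiH' := CleanedAux.phi_nonneg hα H'
      have hphiG : CleanedAux.phi α G ≤ 3 / 8 * (α * ((n : ℝ) * Real.sqrt n)) := by
        unfold CleanedAux.phi
        rw [← hn]
        have hsupp : (CleanedAux.nsupp G : ℝ) ≤ (n : ℝ) := by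
          have h1 : CleanedAux.nsupp G ≤ n := by
            rw [CleanedAux.nsupp]
            have h2 := Set.ncard_le_ncard
              (Set.subset_univ {v | 0 < CleanedAux.deg G v}) (Set.toFinite _)
            rwa [Set.ncard_univ, Nat.card_eq_fintype_card] at h2
          exact_mod_cast h1
        have hpsi : (CleanedAux.psi α G : ℝ) ≤ (n : ℝ) * n * (α ^ 2 / 32) := by
          have h1 : CleanedAux.psi α G ≤ (n * n) * ⌊α ^ 2 / 32⌋₊ := by
            rw [CleanedAux.psi]
            calc ∑ p : V × V, min (codeg G p.1 p.2) ⌊α ^ 2 / 32⌋₊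
                ≤ ∑ _p : V × V, ⌊α ^ 2 / 32⌋₊ :=
                  Finset.sum_le_sum (fun p _ => min_le_right _ _)
              _ = (n * n) * ⌊α ^ 2 / 32⌋₊ := by
                  rw [Finset.sum_const, Finset.card_univ, Fintype.card_prod, smul_eq_mul, ← hn]
          have h2 : (⌊α ^ 2 / 32⌋₊ : ℝ) ≤ α ^ 2 / 32 := Nat.floor_le (by positivity)
          have h1' : (CleanedAux.psi α G : ℝ) ≤ ((n : ℝ) * n) * (⌊α ^ 2 / 32⌋₊ : ℝ) := by
            exact_mod_cast h1
          nlinarith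
        have t1 : α * Real.sqrt n / 4 * (CleanedAux.nsupp G : ℝ) ≤
            1 / 4 * (α * ((n : ℝ) * Real.sqrt n)) := by
          have := mul_le_mul_of_nonneg_left hsupp hD.le
          nlinarith
        have t2 : (CleanedAux.psi α G : ℝ) / (α * Real.sqrt n / 4) ≤
            1 / 8 * (α * ((n : ℝ) * Real.sqrt n)) := by
          rw [div_le_iff₀ hD]
          have heq : 1 / 8 * (α * ((n : ℝ) * Real.sqrt n)) * (α * Real.sqrt n / 4) =
              (n : ℝ) * n * (α ^ 2 / 32) := by
            linear_combination (α ^ 2 * (n : ℝ) / 32) * hss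
          rw [heq]
          exact hpsi
        linarith
      have hfin : (CleanedAux.esize G : ℝ) - CleanedAux.esize H' ≤
          CleanedAux.phi α G - CleanedAux.phi α H' := hineq
      have hE : (H'.edgeSet.ncard : ℝ) = (CleanedAux.esize H' : ℝ) := rfl
      rw [hE]
      linarith
    · intro u v huv
      rw [h12]
      have := hprop u v huv
      linarith
  · push_neg at hpos
    refine ⟨⊥, bot_le, ?_, ?_⟩
    · have h0 : (((⊥ : SimpleGraph V).edgeSet.ncard : ℕ) : ℝ) = 0 := by
        simp
      rw [h0]
      rcases le_or_gt α 0 with hα | hα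
      · have h1 : (0 : ℝ) ≤ ((Fintype.card V : ℝ)) ^ ((3 : ℝ) / 2) :=
          Real.rpow_nonneg (Nat.cast_nonneg _) _
        nlinarith
      · have hn0 : Fintype.card V = 0 := by
          have := hpos hα
          omega
        rw [hn0]
        have hz : ((0 : ℕ) : ℝ) ^ ((3 : ℝ) / 2) = 0 := by
          rw [Nat.cast_zero, Real.zero_rpow (by norm_num : (3 : ℝ) / 2 ≠ 0)]
        rw [hz]
        norm_num
    · intro u v huv
      exact absurd huv (by simp)
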